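/- For all n ≥ 1 and i, j ≥ 0, the coefficients r_{n,i,j} satisfy r_{2n+1,i,j} = 2r_{2n,i,j} + (2i+2)r_{2n,i+1,j-1} + (j+1)r_{2n,i,j+1} + (2n-2i-j+1)r_{2n,i,j-1} and r_{2n,i,j} = 2r_{2n-1,i-1,j} + (2i+1)r_{2n-1,i,j-1} + (j+1)r_{2n-1,i-1,j+1} + (2n-2i-j+1)r_{2n-1,i-1,j-1}. -/

import Mathlib

open MvPolynomial Finset

/-- The derivation for the grammar `G = {w → wx, x → yz, y → xz, z → xy}` on `ℚ[w,x,y,z]`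
(`w = X 0`, `x = X 1`, `y = X 2`, `z = X 3`). -/
noncomputable def Dg : Derivation ℚ (MvPolynomial (Fin 4) ℚ) (MvPolynomial (Fin 4) ℚ) :=
  MvPolynomial.mkDerivation ℚ ![X 0 * X 1, X 2 * X 3, X 1 * X 3, X 1 * X 2]

/-- `rC n i j` is the coefficient `r_{n,i,j}` of `D^n(w^2)`:
for even `n`, the coefficient of `w^2 x^(2i) y^j z^(n-2i-j)`;
for odd `n`, the coefficient of `w^2 x^(2i+1) y^j z^(n-1-2i-j)`.
Coefficients with negative indices are `0`. -/
noncomputable def rC (n : ℕ) (i j : ℤ) : ℚ :=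
  if 0 ≤ i ∧ 0 ≤ j then
    MvPolynomial.coeff
      (Finsupp.single 0 2
        + Finsupp.single 1 ((if Even n then 2*i else 2*i+1).toNat)
        + Finsupp.single 2 j.toNat
        + Finsupp.single 3 (((n:ℤ) - 2*i - j - if Even n then 0 else 1).toNat))
      ((fun p => Dg p)^[n] (X 0 ^ 2))
  else 0

/-!
Read coefficients at integer exponent vectors, as `0` off the nonnegative orthant. Then,
since `D = wx ∂_w + yz ∂_x + xz ∂_y + xy ∂_z`, the coefficient of `w^a x^b y^c z^d` in `D p`
is one fixed combination of four coefficients of `p` for all integers `a, b, c, d`, with no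
boundary cases (`intCoeff_Dg`). The two recurrences are this identity at the exponents
`(2, 2i+1, j, 2n-2i-j)` and `(2, 2i, j, 2n-2i-j)`.
-/

section IntExponents

variable {σ : Type*}

theorem exists_finsupp_natCast_or_neg [Finite σ] (m : σ → ℤ) :
    (∃ n : σ →₀ ℕ, m = fun i => (n i : ℤ)) ∨ ∃ i, m i < 0 := by
  by_cases h : ∀ i, 0 ≤ m i
  · refine .inl ⟨Finsupp.equivFunOnFinite.symm fun i => (m i).toNat, ?_⟩
    ext i
    simp [h i]
  · push Not at h
    exact .inr h

theorem natCast_finsupp_add_single [DecidableEq σ] (n : σ →₀ ℕ) (i : σ) :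
    (fun j => ((n + Finsupp.single i 1 : σ →₀ ℕ) j : ℤ)) = (fun j => (n j : ℤ)) + Pi.single i 1 := by
  ext j
  by_cases hj : j = i <;> simp [hj]

end IntExponents

namespace MvPolynomial

variable {R σ : Type*}

section CommSemiring

variable [CommSemiring R]

theorem mkDerivation_apply_eq_sum_mul_pderiv [Fintype σ] (f : σ → MvPolynomial σ R)
    (p : MvPolynomial σ R) : mkDerivation R f p = ∑ i, f i * pderiv i p := by
  classical
  have h : mkDerivation R f = ∑ i, f i • pderiv i :=
    derivation_ext fun j => by
      rw [mkDerivation_X, ← Derivation.coeFnAddMonoidHom_apply, map_sum, Finset.sum_apply]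
      simp [pderiv_X, Pi.single_apply]
  rw [h, ← Derivation.coeFnAddMonoidHom_apply, map_sum, Finset.sum_apply]
  simp

theorem IsHomogeneous.mkDerivation [Fintype σ] {f : σ → MvPolynomial σ R} {e n : ℕ}
    (hf : ∀ i, (f i).IsHomogeneous e) {p : MvPolynomial σ R} (hp : p.IsHomogeneous (n + 1)) :
    (MvPolynomial.mkDerivation R f p).IsHomogeneous (e + n) := by
  rw [mkDerivation_apply_eq_sum_mul_pderiv]
  exact IsHomogeneous.sum _ _ _ fun i _ => (hf i).mul (hp.pderiv (i := i))

end CommSemiring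

section CommRing

variable [CommRing R] [Fintype σ]

noncomputable def intCoeff (m : σ → ℤ) : MvPolynomial σ R →ₗ[R] R :=
  if ∀ i, 0 ≤ m i then lcoeff R (Finsupp.equivFunOnFinite.symm fun i => (m i).toNat) else 0

theorem intCoeff_natCast (n : σ →₀ ℕ) (p : MvPolynomial σ R) :
    intCoeff (fun i => (n i : ℤ)) p = coeff n p := by
  rw [intCoeff, if_pos fun i => Int.natCast_nonneg _, lcoeff_apply]
  congr
  ext i
  simp

theorem intCoeff_of_neg {m : σ → ℤ} {i : σ} (hi : m i < 0) (p : MvPolynomial σ R) :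
    intCoeff m p = 0 := by
  rw [intCoeff, if_neg fun h => (h i).not_gt hi, LinearMap.zero_apply]

theorem intCoeff_X_mul [DecidableEq σ] (m : σ → ℤ) (i : σ) (p : MvPolynomial σ R) :
    intCoeff m (X i * p) = intCoeff (m - Pi.single i 1) p := by
  obtain ⟨n, rfl⟩ | ⟨k, hk⟩ := exists_finsupp_natCast_or_neg m
  · by_cases hi : n i = 0
    · rw [intCoeff_natCast, coeff_X_mul', if_neg (by simpa using hi),
        intCoeff_of_neg (i := i) (by simp [hi])]
    · obtain ⟨n, rfl⟩ : ∃ n', n = n' + Finsupp.single i 1 :=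
        ⟨n - Finsupp.single i 1, (tsub_add_cancel_of_le (by simpa [Nat.one_le_iff_ne_zero])).symm⟩
      rw [intCoeff_natCast, natCast_finsupp_add_single, add_sub_cancel_right, intCoeff_natCast,
        add_comm, coeff_X_mul]
  · rw [intCoeff_of_neg hk, intCoeff_of_neg (i := k)]
    simp only [Pi.sub_apply, Pi.single_apply]
    split_ifs <;> omega

theorem intCoeff_pderiv [DecidableEq σ] (m : σ → ℤ) (i : σ) (p : MvPolynomial σ R) :
    intCoeff m (pderiv i p) = (m i + 1) * intCoeff (m + Pi.single i 1) p := by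
  obtain ⟨n, rfl⟩ | ⟨k, hk⟩ := exists_finsupp_natCast_or_neg m
  · rw [intCoeff_natCast, coeff_pderiv, ← natCast_finsupp_add_single, intCoeff_natCast, mul_comm]
    push_cast
    rfl
  · by_cases hki : m i = -1
    · rw [intCoeff_of_neg hk, hki]
      simp
    · rw [intCoeff_of_neg hk, intCoeff_of_neg (i := k), mul_zero]
      simp only [Pi.add_apply, Pi.single_apply]
      split_ifs with h
      · subst h; omega
      · omega

theorem intCoeff_X_mul_X_mul_pderiv [DecidableEq σ] {m m' : σ → ℤ} {i j l : σ}
    (h : m - Pi.single i 1 - Pi.single j 1 + Pi.single l 1 = m') (p : MvPolynomial σ R) :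
    intCoeff m (X i * X j * pderiv l p) = m' l * intCoeff m' p := by
  rw [mul_assoc, intCoeff_X_mul, intCoeff_X_mul, intCoeff_pderiv, ← h]
  simp

end CommRing

end MvPolynomial

theorem Dg_apply (p : MvPolynomial (Fin 4) ℚ) :
    Dg p = X 0 * X 1 * pderiv 0 p + X 2 * X 3 * pderiv 1 p
      + X 1 * X 3 * pderiv 2 p + X 1 * X 2 * pderiv 3 p := by
  rw [Dg, mkDerivation_apply_eq_sum_mul_pderiv, Fin.sum_univ_four]
  rfl

theorem isHomogeneous_iterate_Dg (k : ℕ) :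
    ((fun p => Dg p)^[k] (X 0 ^ 2)).IsHomogeneous (k + 2) := by
  induction k with
  | zero => exact (isHomogeneous_X ℚ 0).pow 2
  | succ k ih =>
    rw [Function.iterate_succ_apply', show k + 1 + 2 = 2 + (k + 1) by ring]
    refine IsHomogeneous.mkDerivation (n := k + 1) (fun i => ?_) ih
    fin_cases i <;> exact (isHomogeneous_X ℚ _).mul (isHomogeneous_X ℚ _)

theorem intCoeff_Dg (a b c d : ℤ) (p : MvPolynomial (Fin 4) ℚ) :
    intCoeff ![a, b, c, d] (Dg p) =
      a * intCoeff ![a, b - 1, c, d] p + (b + 1) * intCoeff ![a, b + 1, c - 1, d - 1] p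
        + (c + 1) * intCoeff ![a, b - 1, c + 1, d - 1] p
        + (d + 1) * intCoeff ![a, b - 1, c - 1, d + 1] p := by
  rw [Dg_apply, map_add, map_add, map_add,
    intCoeff_X_mul_X_mul_pderiv (m' := ![a, b - 1, c, d]),
    intCoeff_X_mul_X_mul_pderiv (m' := ![a, b + 1, c - 1, d - 1]),
    intCoeff_X_mul_X_mul_pderiv (m' := ![a, b - 1, c + 1, d - 1]),
    intCoeff_X_mul_X_mul_pderiv (m' := ![a, b - 1, c - 1, d + 1])]
  · simp
  all_goals ext k; fin_cases k <;> simp only [Pi.add_apply, Pi.sub_apply, Pi.single_apply] <;> simp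

theorem coeff_iterate_Dg_eq_intCoeff (k : ℕ) {x y z : ℤ} (hx : 0 ≤ x) (hy : 0 ≤ y)
    (hdeg : x + y + z = k) :
    coeff (Finsupp.single 0 2 + Finsupp.single 1 x.toNat + Finsupp.single 2 y.toNat
        + Finsupp.single 3 z.toNat) ((fun p => Dg p)^[k] (X 0 ^ 2)) =
      intCoeff ![2, x, y, z] ((fun p => Dg p)^[k] (X 0 ^ 2)) := by
  by_cases hz : 0 ≤ z
  · rw [← intCoeff_natCast]
    congr
    ext l
    fin_cases l <;> simp [hx, hy, hz]
  -- `rC` truncates a negative exponent of `z` to `0`; the monomial then has the wrong degree.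
  · rw [intCoeff_of_neg (i := 3) (by simpa using hz)]
    refine (isHomogeneous_iterate_Dg k).coeff_eq_zero ?_
    simp only [map_add, Finsupp.degree_single]
    omega

theorem rC_eq_intCoeff (k : ℕ) (i j : ℤ) :
    rC k i j = intCoeff ![2, if Even k then 2 * i else 2 * i + 1, j,
      k - 2 * i - j - if Even k then 0 else 1] ((fun p => Dg p)^[k] (X 0 ^ 2)) := by
  unfold rC
  split_ifs with hij hk hk
  · exact coeff_iterate_Dg_eq_intCoeff k (by omega) hij.2 (by omega)
  · exact coeff_iterate_Dg_eq_intCoeff k (by omega) hij.2 (by omega)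
  all_goals
    rcases not_and_or.mp hij with hi | hj
    · exact (intCoeff_of_neg (i := 1) (by simp; omega) _).symm
    · exact (intCoeff_of_neg (i := 2) (by simp; omega) _).symm

theorem rC_two_mul (n : ℕ) (i j : ℤ) :
    rC (2 * n) i j =
      intCoeff ![2, 2 * i, j, 2 * n - 2 * i - j] ((fun p => Dg p)^[2 * n] (X 0 ^ 2)) := by
  rw [rC_eq_intCoeff, if_pos (even_two_mul n), if_pos (even_two_mul n)]
  push_cast
  ring_nf

theorem rC_two_mul_add_one (n : ℕ) (i j : ℤ) :
    rC (2 * n + 1) i j =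
      intCoeff ![2, 2 * i + 1, j, 2 * n - 2 * i - j] ((fun p => Dg p)^[2 * n + 1] (X 0 ^ 2)) := by
  rw [rC_eq_intCoeff, if_neg (Nat.not_even_two_mul_add_one n),
    if_neg (Nat.not_even_two_mul_add_one n)]
  push_cast
  ring_nf

theorem stmt13_general (n : ℕ) (hn : 1 ≤ n) (i j : ℤ) :
    rC (2*n+1) i j =
      2 * rC (2*n) i j + (2*(i:ℚ)+2) * rC (2*n) (i+1) (j-1) + ((j:ℚ)+1) * rC (2*n) i (j+1)
        + (2*(n:ℚ)-2*(i:ℚ)-(j:ℚ)+1) * rC (2*n) i (j-1) ∧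
    rC (2*n) i j =
      2 * rC (2*n-1) (i-1) j + (2*(i:ℚ)+1) * rC (2*n-1) i (j-1)
        + ((j:ℚ)+1) * rC (2*n-1) (i-1) (j+1)
        + (2*(n:ℚ)-2*(i:ℚ)-(j:ℚ)+1) * rC (2*n-1) (i-1) (j-1) := by
  constructor
  · rw [rC_two_mul_add_one, Function.iterate_succ_apply', intCoeff_Dg]
    simp only [rC_two_mul]
    push_cast
    ring_nf
  · obtain ⟨m, rfl⟩ : ∃ m, n = m + 1 := ⟨n - 1, by omega⟩
    rw [rC_two_mul, show 2 * (m + 1) = 2 * m + 1 + 1 by ring, Function.iterate_succ_apply',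
      intCoeff_Dg, Nat.add_sub_cancel]
    simp only [rC_two_mul_add_one]
    push_cast
    ring_nf

theorem stmt13 (n : ℕ) (hn : 1 ≤ n) (i j : ℤ) (hi : 0 ≤ i) (hj : 0 ≤ j) :
    rC (2*n+1) i j =
      2 * rC (2*n) i j + (2*(i:ℚ)+2) * rC (2*n) (i+1) (j-1) + ((j:ℚ)+1) * rC (2*n) i (j+1)
        + (2*(n:ℚ)-2*(i:ℚ)-(j:ℚ)+1) * rC (2*n) i (j-1) ∧
    rC (2*n) i j =
      2 * rC (2*n-1) (i-1) j + (2*(i:ℚ)+1) * rC (2*n-1) i (j-1)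
        + ((j:ℚ)+1) * rC (2*n-1) (i-1) (j+1)
        + (2*(n:ℚ)-2*(i:ℚ)-(j:ℚ)+1) * rC (2*n-1) (i-1) (j-1) :=
  stmt13_general n hn i j
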